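/- arXiv:2605.21555 — 2 statements merged into one kernel-verified Lean document; each statement's English description precedes it below -/
import Mathlib

section
/- Let H = K ⊕ K⊥ and let M be a unitary operator on H with block matrix [[A, C], [B, D]]. Then A is a partial isometry if and only if B is a partial isometry, if and only if D is a partial isometry. -/
open ContinuousLinearMap

noncomputable instance {H : Type*} [NormedAddCommGroup H] [InnerProductSpace ℂ H]
    [CompleteSpace H] (K : Submodule ℂ H) : CompleteSpace Kᗮ :=
  K.isClosed_orthogonal.completeSpace_coe

/-- A bounded operator between inner product spaces is a partial isometry if it is
isometric on the orthogonal complement of its kernel. -/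
def IsPartialIsometryCLM {E F : Type*} [NormedAddCommGroup E] [InnerProductSpace ℂ E]
    [NormedAddCommGroup F] [InnerProductSpace ℂ F] (T : E →L[ℂ] F) : Prop :=
  ∀ h ∈ (LinearMap.ker (T : E →ₗ[ℂ] F))ᗮ, ‖T h‖ = ‖h‖

open scoped InnerProductSpace

section Aux

variable {E F : Type*} [NormedAddCommGroup E] [InnerProductSpace ℂ E]
  [NormedAddCommGroup F] [InnerProductSpace ℂ F] [CompleteSpace E] [CompleteSpace F]

/-- A partial isometry iff `T*T` is idempotent. -/
lemma pi_iff_idem (T : E →L[ℂ] F) :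
    IsPartialIsometryCLM T ↔
      (adjoint T ∘L T) ∘L (adjoint T ∘L T) = adjoint T ∘L T := by
  haveI : CompleteSpace (LinearMap.ker (T : E →ₗ[ℂ] F)) := T.isClosed_ker.completeSpace_coe
  set P : E →L[ℂ] E := adjoint T ∘L T with hPdef
  have hPinner : ∀ x y : E, ⟪P x, y⟫_ℂ = ⟪T x, T y⟫_ℂ := by
    intro x y
    simp only [hPdef, comp_apply]
    exact adjoint_inner_left T y (T x)
  have hker : ∀ x, P x = 0 → T x = 0 := by
    intro x hx
    have : ⟪T x, T x⟫_ℂ = 0 := by rw [← hPinner, hx, inner_zero_left]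
    exact inner_self_eq_zero.mp this
  have hPorth : ∀ x : E, P x ∈ (LinearMap.ker (T : E →ₗ[ℂ] F))ᗮ := by
    intro x
    rw [Submodule.mem_orthogonal]
    intro u hu
    have hTu : T u = 0 := hu
    have : ⟪P x, u⟫_ℂ = 0 := by rw [hPinner, hTu, inner_zero_right]
    simpa [← inner_conj_symm u (P x), this]
  constructor
  · intro hpi
    have hTnorm : ∀ x : E, ‖T x‖ ≤ ‖x‖ := by
      intro x
      obtain ⟨u, hu, v, hv, rfl⟩ := (LinearMap.ker (T : E →ₗ[ℂ] F)).exists_add_mem_mem_orthogonal x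
      have hTu : T u = 0 := hu
      have h1 : T (u + v) = T v := by simp [map_add, hTu]
      have h2 : ‖T v‖ = ‖v‖ := hpi v hv
      have hinner : ⟪u, v⟫_ℂ = 0 := (Submodule.mem_orthogonal _ _).mp hv u hu
      have h3 := norm_add_sq_eq_norm_sq_add_norm_sq_of_inner_eq_zero u v hinner
      rw [h1, h2]
      nlinarith [norm_nonneg u, norm_nonneg v, norm_nonneg (u + v), h3]
    have hfix : ∀ v ∈ (LinearMap.ker (T : E →ₗ[ℂ] F))ᗮ, P v = v := by
      intro v hv
      have hre : RCLike.re ⟪P v, v⟫_ℂ = ‖v‖ ^ 2 := by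
        rw [hPinner, inner_self_eq_norm_sq, hpi v hv]
      have hPnorm : ‖P v‖ ≤ ‖v‖ := by
        calc ‖P v‖ = ‖adjoint T (T v)‖ := rfl
          _ ≤ ‖adjoint T‖ * ‖T v‖ := le_opNorm _ _
          _ = ‖T‖ * ‖T v‖ := by rw [adjoint.norm_map]
          _ ≤ 1 * ‖v‖ := by
              have hT1 : ‖T‖ ≤ 1 := T.opNorm_le_bound zero_le_one (by simpa using hTnorm)
              have := hTnorm v
              have h0 : ‖T‖ * ‖T v‖ ≤ 1 * ‖T v‖ :=
                mul_le_mul_of_nonneg_right hT1 (norm_nonneg _)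
              nlinarith [norm_nonneg (T v), norm_nonneg v]
          _ = ‖v‖ := one_mul _
      have hns := norm_sub_sq (𝕜 := ℂ) (P v) v
      rw [hre] at hns
      have hsq : ‖P v - v‖ ^ 2 = ‖P v‖ ^ 2 - ‖v‖ ^ 2 := by rw [hns]; ring
      have : ‖P v - v‖ ^ 2 ≤ 0 := by nlinarith [norm_nonneg (P v), norm_nonneg v]
      have : ‖P v - v‖ = 0 := by nlinarith [norm_nonneg (P v - v)]
      have := norm_eq_zero.mp this
      exact sub_eq_zero.mp this
    ext x
    obtain ⟨u, hu, v, hv, rfl⟩ := (LinearMap.ker (T : E →ₗ[ℂ] F)).exists_add_mem_mem_orthogonal x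
    have hTu : T u = 0 := hu
    have hPu : P u = 0 := by simp [hPdef, comp_apply, hTu]
    have hPx : P (u + v) = v := by rw [map_add, hPu, hfix v hv, zero_add]
    simp only [comp_apply, hPx, hfix v hv]
  · intro hP
    intro x hx
    have hPx : P x = x := by
      have hkerP : P (P x - x) = 0 := by
        have : P (P x) = P x := by
          have := congrArg (fun S : E →L[ℂ] E => S x) hP
          simpa [comp_apply] using this
        simp [map_sub, this]
      have hmemker : P x - x ∈ LinearMap.ker (T : E →ₗ[ℂ] F) := by
        exact LinearMap.mem_ker.mpr (hker _ hkerP)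
      have hmemorth : P x - x ∈ (LinearMap.ker (T : E →ₗ[ℂ] F))ᗮ :=
        Submodule.sub_mem _ (hPorth x) hx
      have : ⟪P x - x, P x - x⟫_ℂ = 0 :=
        (Submodule.mem_orthogonal _ _).mp hmemorth _ hmemker
      have := inner_self_eq_zero.mp this
      exact sub_eq_zero.mp this
    have h2 : ‖T x‖ ^ 2 = ‖x‖ ^ 2 := by
      rw [← inner_self_eq_norm_sq (𝕜 := ℂ) (T x), ← hPinner, hPx, inner_self_eq_norm_sq]
    nlinarith [norm_nonneg (T x), norm_nonneg x]

/-- `T*T` idempotent implies `T T* T = T`. -/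
lemma tripleTT (T : E →L[ℂ] F)
    (h : (adjoint T ∘L T) ∘L (adjoint T ∘L T) = adjoint T ∘L T) :
    T ∘L (adjoint T ∘L T) = T := by
  set R : E →L[ℂ] F := T ∘L (adjoint T ∘L T) - T with hR
  have hzero : adjoint R ∘L R = 0 := by
    have hadj : adjoint R = (adjoint T ∘L T) ∘L adjoint T - adjoint T := by
      rw [hR, map_sub, adjoint_comp, adjoint_comp, adjoint_adjoint, comp_assoc]
    rw [hadj, hR]
    ext x
    simp only [comp_apply, sub_apply, map_sub, zero_apply]
    have h1 : ∀ y, (adjoint T) (T ((adjoint T) (T y))) = (adjoint T) (T y) := by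
      intro y
      have := congrArg (fun S : E →L[ℂ] E => S y) h
      simpa [comp_apply] using this
    simp [h1, map_sub]
  have hRnorm : ‖R‖ = 0 := by
    have := norm_adjoint_comp_self R
    rw [hzero, norm_zero] at this
    nlinarith [norm_nonneg R]
  have : R = 0 := norm_eq_zero.mp hRnorm
  have := sub_eq_zero.mp (hR ▸ this)
  exact this

/-- `T*T` idempotent iff `T T*` idempotent. -/
lemma idem_swap_iff (T : E →L[ℂ] F) :
    (adjoint T ∘L T) ∘L (adjoint T ∘L T) = adjoint T ∘L T ↔
      (T ∘L adjoint T) ∘L (T ∘L adjoint T) = T ∘L adjoint T := by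
  constructor
  · intro h
    have h3 := tripleTT T h
    ext y
    have := congrArg (fun S : F →L[ℂ] F => T (adjoint T (S y)))
      (rfl : T ∘L adjoint T = T ∘L adjoint T)
    have key : ∀ x, T (adjoint T (T x)) = T x := by
      intro x
      have := congrArg (fun S : E →L[ℂ] F => S x) h3
      simpa [comp_apply] using this
    simp only [comp_apply]
    exact key (adjoint T y)
  · intro h
    have h' : (adjoint (adjoint T) ∘L adjoint T) ∘L (adjoint (adjoint T) ∘L adjoint T)
        = adjoint (adjoint T) ∘L adjoint T := by
      simpa [adjoint_adjoint] using h
    have h3 := tripleTT (adjoint T) h'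
    rw [adjoint_adjoint] at h3
    ext x
    have key : ∀ y, adjoint T (T (adjoint T y)) = adjoint T y := by
      intro y
      have := congrArg (fun S : F →L[ℂ] E => S y) h3
      simpa [comp_apply] using this
    simp only [comp_apply]
    exact key (T x)

/-- Complementary idempotents. -/
lemma compl_idem {R : Type*} [Ring R] {p q : R} (h : p + q = 1) :
    p * p = p ↔ q * q = q := by
  have hq : q = 1 - p := eq_sub_of_add_eq' h
  subst hq
  have key : (1 - p) * (1 - p) = (1 - p) - (p - p * p) := by noncomm_ring
  constructor
  · intro h'
    rw [key, h', sub_self, sub_zero]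
  · intro h'
    rw [key] at h'
    have h2 := sub_eq_self.mp h'
    exact (sub_eq_zero.mp h2).symm


/-- If `N` is inner-product preserving and decomposes as `S + T` into orthogonal pieces,
then `S*S + T*T = 1`. -/
lemma sum_sq {H E₀ : Type*} [NormedAddCommGroup H] [InnerProductSpace ℂ H] [CompleteSpace H]
    [NormedAddCommGroup E₀] [InnerProductSpace ℂ E₀] [CompleteSpace E₀]
    (K : Submodule ℂ H) [CompleteSpace K]
    (S : E₀ →L[ℂ] K) (T : E₀ →L[ℂ] Kᗮ) (N : E₀ → H)
    (hN : ∀ x, N x = (S x : H) + (T x : H))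
    (hiso : ∀ x x', ⟪N x, N x'⟫_ℂ = ⟪x, x'⟫_ℂ) :
    adjoint S ∘L S + adjoint T ∘L T = 1 := by
  have key : ∀ x x' : E₀,
      ⟪(S x : H), (S x' : H)⟫_ℂ + ⟪(T x : H), (T x' : H)⟫_ℂ = ⟪x, x'⟫_ℂ := by
    intro x x'
    have c1 : ⟪(S x : H), (T x' : H)⟫_ℂ = 0 :=
      Submodule.inner_right_of_mem_orthogonal (S x).2 (T x').2
    have c2 : ⟪(T x : H), (S x' : H)⟫_ℂ = 0 :=
      Submodule.inner_left_of_mem_orthogonal (S x').2 (T x).2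
    have h0 : ⟪N x, N x'⟫_ℂ
        = ⟪(S x : H), (S x' : H)⟫_ℂ + ⟪(T x : H), (T x' : H)⟫_ℂ := by
      rw [hN, hN, inner_add_left, inner_add_right, inner_add_right, c1, c2]
      ring
    rw [← h0, hiso]
  ext x
  refine ext_inner_right ℂ fun x' => ?_
  simp only [add_apply, comp_apply, inner_add_left, adjoint_inner_left, one_apply]
  rw [Submodule.coe_inner, Submodule.coe_inner]
  exact key x x'

end Aux

set_option maxHeartbeats 1600000 in
/-- If `M` on `H = K ⊕ Kᗮ` is unitary with block matrix `[[A, C], [B, D]]`,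
then `A` is a partial isometry iff `B` is, iff `D` is. -/
theorem stmt_5 {H : Type*} [NormedAddCommGroup H] [InnerProductSpace ℂ H] [CompleteSpace H]
    (K : Submodule ℂ H) [CompleteSpace K]
    (M : H →L[ℂ] H) (A : K →L[ℂ] K) (B : K →L[ℂ] Kᗮ) (C : Kᗮ →L[ℂ] K) (D : Kᗮ →L[ℂ] Kᗮ)
    (hblock : ∀ (x : K) (y : Kᗮ),
      M ((x : H) + (y : H)) = ((A x : H) + (C y : H)) + ((B x : H) + (D y : H)))
    (hM₁ : adjoint M ∘L M = 1) (hM₂ : M ∘L adjoint M = 1) :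
    (IsPartialIsometryCLM A ↔ IsPartialIsometryCLM B) ∧
      (IsPartialIsometryCLM B ↔ IsPartialIsometryCLM D) := by
  classical
  -- inner product identities from unitarity
  have hMinner : ∀ z w : H, ⟪M z, M w⟫_ℂ = ⟪z, w⟫_ℂ := by
    intro z w
    rw [← adjoint_inner_left]
    have hz : adjoint M (M z) = z := by
      have := congrArg (fun S : H →L[ℂ] H => S z) hM₁
      simpa using this
    rw [hz]
  have hM'inner : ∀ z w : H, ⟪adjoint M z, adjoint M w⟫_ℂ = ⟪z, w⟫_ℂ := by
    intro z w
    rw [adjoint_inner_right]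
    have hz : M (adjoint M z) = z := by
      have := congrArg (fun S : H →L[ℂ] H => S z) hM₂
      simpa using this
    rw [hz]
  -- the first column of M
  have hN1 : ∀ x : K, M (x : H) = ((A x : K) : H) + ((B x : Kᗮ) : H) := by
    intro x
    have := hblock x 0
    simpa using this
  have h1iso : ∀ x x' : K, ⟪M (x : H), M (x' : H)⟫_ℂ = ⟪x, x'⟫_ℂ := by
    intro x x'
    rw [hMinner, Submodule.coe_inner]
  have h1 : adjoint A ∘L A + adjoint B ∘L B = 1 :=
    sum_sq K A B (fun x : K => M (x : H)) hN1 h1iso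
  -- the second row of M, i.e. the second column of M*
  have hN2 : ∀ y : Kᗮ, adjoint M (y : H)
      = ((adjoint B y : K) : H) + ((adjoint D y : Kᗮ) : H) := by
    intro y
    refine ext_inner_right ℂ fun z => ?_
    obtain ⟨u, hu, w, hw, hz⟩ := K.exists_add_mem_mem_orthogonal z
    set u' : K := ⟨u, hu⟩ with hu'
    set w' : Kᗮ := ⟨w, hw⟩ with hw'
    have hz' : z = (u' : H) + (w' : H) := hz
    rw [hz', adjoint_inner_left, hblock u' w']
    have z1 : ⟪(y : H), (A u' : H)⟫_ℂ = 0 :=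
      Submodule.inner_left_of_mem_orthogonal (A u').2 y.2
    have z2 : ⟪(y : H), (C w' : H)⟫_ℂ = 0 :=
      Submodule.inner_left_of_mem_orthogonal (C w').2 y.2
    have z3 : ⟪((adjoint B y : K) : H), (w' : H)⟫_ℂ = 0 :=
      Submodule.inner_right_of_mem_orthogonal (adjoint B y).2 w'.2
    have z4 : ⟪((adjoint D y : Kᗮ) : H), (u' : H)⟫_ℂ = 0 :=
      Submodule.inner_left_of_mem_orthogonal u'.2 (adjoint D y).2
    have e1 : ⟪(y : H), (B u' : H)⟫_ℂ = ⟪((adjoint B y : K) : H), (u' : H)⟫_ℂ := by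
      rw [← Submodule.coe_inner, ← Submodule.coe_inner, adjoint_inner_left]
    have e2 : ⟪(y : H), (D w' : H)⟫_ℂ = ⟪((adjoint D y : Kᗮ) : H), (w' : H)⟫_ℂ := by
      rw [← Submodule.coe_inner, ← Submodule.coe_inner, adjoint_inner_left]
    rw [inner_add_right, inner_add_right, inner_add_right, inner_add_left, inner_add_right,
      inner_add_right, z1, z2, z3, z4, e1, e2]
    ring
  have h2iso : ∀ y y' : Kᗮ,
      ⟪adjoint M (y : H), adjoint M (y' : H)⟫_ℂ = ⟪y, y'⟫_ℂ := by
    intro y y'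
    rw [hM'inner, Submodule.coe_inner]
  have h2' := sum_sq K (adjoint B) (adjoint D) (fun y : Kᗮ => adjoint M (y : H)) hN2 h2iso
  simp only [adjoint_adjoint] at h2'
  -- assemble
  have hAB : IsPartialIsometryCLM A ↔ IsPartialIsometryCLM B := by
    rw [pi_iff_idem A, pi_iff_idem B]
    have := compl_idem (p := adjoint A ∘L A) (q := adjoint B ∘L B) h1
    simpa only [mul_def] using this
  have hBD : IsPartialIsometryCLM B ↔ IsPartialIsometryCLM D := by
    rw [pi_iff_idem B, pi_iff_idem D, idem_swap_iff B, idem_swap_iff D]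
    have := compl_idem (p := B ∘L adjoint B) (q := D ∘L adjoint D) h2'
    simpa only [mul_def] using this
  exact ⟨hAB, hBD⟩
end

section
/- Let θ be an inner function, K_θ the model space, and φ ∈ L∞(𝕋). The truncated Toeplitz operator A_φ f = P_θ(φ f) on K_θ satisfies A_φ* = C A_φ C, where C is the conjugation Cf = θ·conj(zf) restricted to K_θ. In particular every bounded truncated Toeplitz operator is complex symmetric. -/
noncomputable section
open MeasureTheory Complex Real Filter

instance : Fact ((0:ℝ) < 2 * π) := ⟨by positivity⟩

/-- Normalized Lebesgue (Haar) measure on the circle `ℝ / 2πℤ`. -/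
abbrev μT : Measure (AddCircle (2 * π)) := AddCircle.haarAddCircle

/-- `L²(𝕋)`. -/
abbrev L2T := Lp ℂ 2 μT

/-- The Hardy space `H²`, the closed span of the nonnegative Fourier modes in `L²(𝕋)`. -/
def hardy : Submodule ℂ L2T :=
  (Submodule.span ℂ (Set.range fun n : ℕ => fourierLp 2 (n : ℤ))).topologicalClosure

instance : CompleteSpace hardy :=
  (Submodule.isClosed_topologicalClosure _).completeSpace_coe

instance (K : Submodule ℂ L2T) : CompleteSpace Kᗮ :=
  K.isClosed_orthogonal.completeSpace_coe

/-- An inner function: (essentially) bounded measurable, unimodular a.e., with vanishing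
negative Fourier coefficients (i.e. belonging to `H^∞`). -/
structure IsInner (u : AddCircle (2 * π) → ℂ) : Prop where
  meas : AEStronglyMeasurable u μT
  unimod : ∀ᵐ t ∂μT, ‖u t‖ = 1
  analytic : ∀ n : ℤ, n < 0 → fourierCoeff u n = 0

/-- `θ · H²`, the image of the Hardy space under multiplication by `θ`. -/
def mulHardy (θ : AddCircle (2 * π) → ℂ) : Submodule ℂ L2T where
  carrier := {g : L2T | ∃ h : L2T, h ∈ hardy ∧ ⇑g =ᵐ[μT] fun t => θ t * h t}
  zero_mem' := by
    refine ⟨0, hardy.zero_mem, ?_⟩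
    filter_upwards [Lp.coeFn_zero ℂ 2 μT] with t ht
    simp [ht]
  add_mem' := by
    rintro g₁ g₂ ⟨h₁, hh₁, e₁⟩ ⟨h₂, hh₂, e₂⟩
    refine ⟨h₁ + h₂, hardy.add_mem hh₁ hh₂, ?_⟩
    filter_upwards [Lp.coeFn_add g₁ g₂, Lp.coeFn_add h₁ h₂, e₁, e₂] with t a b c d
    simp only [a, b, Pi.add_apply, c, d]
    ring
  smul_mem' := by
    rintro c g ⟨h, hh, e⟩
    refine ⟨c • h, hardy.smul_mem c hh, ?_⟩
    filter_upwards [Lp.coeFn_smul c g, Lp.coeFn_smul c h, e] with t a b hc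
    simp only [a, b, Pi.smul_apply, hc, smul_eq_mul]
    ring

/-- The model space `K_θ = H² ⊖ θH²`. -/
def modelSpace (θ : AddCircle (2 * π) → ℂ) : Submodule ℂ L2T :=
  hardy ⊓ (mulHardy θ)ᗮ

instance (θ : AddCircle (2 * π) → ℂ) : CompleteSpace (modelSpace θ) := by
  refine @IsClosed.completeSpace_coe _ _ _ _ ?_
  have h : (modelSpace θ : Set L2T) = (hardy : Set L2T) ∩ ((mulHardy θ)ᗮ : Set L2T) := rfl
  rw [h]
  exact (Submodule.isClosed_topologicalClosure _).inter ((mulHardy θ).isClosed_orthogonal)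

/-- The orthogonal projection of `L²(𝕋)` onto `H²`. -/
def Ph : L2T →L[ℂ] hardy := hardy.orthogonalProjectionOnto

/-- The orthogonal projection of `L²(𝕋)` onto the model space `K_θ`. -/
def Pmod (θ : AddCircle (2 * π) → ℂ) : L2T →L[ℂ] modelSpace θ :=
  (modelSpace θ).orthogonalProjectionOnto

/-- The orthogonal projection of `L²(𝕋)` onto `K_θᗮ`. -/
def Qmod (θ : AddCircle (2 * π) → ℂ) : L2T →L[ℂ] (modelSpace θ)ᗮ :=
  (modelSpace θ)ᗮ.orthogonalProjectionOnto

/-- `A` is the truncated Toeplitz operator with symbol `φ` on `K_θ`. -/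
def IsTTO (θ φ : AddCircle (2 * π) → ℂ) (A : modelSpace θ →L[ℂ] modelSpace θ) : Prop :=
  ∀ (f : modelSpace θ) (g : L2T),
    (⇑g =ᵐ[μT] fun t => φ t * (f : L2T) t) → A f = Pmod θ g

/-- `B` is the truncated Hankel operator with symbol `φ` : `K_θ → K_θᗮ`. -/
def IsTHO (θ φ : AddCircle (2 * π) → ℂ) (B : modelSpace θ →L[ℂ] (modelSpace θ)ᗮ) : Prop :=
  ∀ (f : modelSpace θ) (g : L2T),
    (⇑g =ᵐ[μT] fun t => φ t * (f : L2T) t) → B f = Qmod θ g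

/-- `D` is the dual truncated Toeplitz operator with symbol `φ` on `K_θᗮ`. -/
def IsDTTO (θ φ : AddCircle (2 * π) → ℂ) (D : (modelSpace θ)ᗮ →L[ℂ] (modelSpace θ)ᗮ) : Prop :=
  ∀ (f : (modelSpace θ)ᗮ) (g : L2T),
    (⇑g =ᵐ[μT] fun t => φ t * (f : L2T) t) → D f = Qmod θ g

set_option maxHeartbeats 1000000 in
/-- every truncated Toeplitz operator `A_φ` on `K_θ` is complex symmetric
with respect to the Sarason conjugation `C f = θ·conj(z f)`: `A_φ* = C A_φ C`. -/
theorem stmt_14 (θ φ : AddCircle (2 * π) → ℂ) (hθ : IsInner θ)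
    (hφm : AEStronglyMeasurable φ μT) (M : ℝ) (hφb : ∀ᵐ t ∂μT, ‖φ t‖ ≤ M)
    (A : modelSpace θ →L[ℂ] modelSpace θ) (hA : IsTTO θ φ A)
    (Cm : L2T → L2T)
    (hC : ∀ f : L2T, ⇑(Cm f) =ᵐ[μT] fun t => θ t * (starRingEnd ℂ) (fourier 1 t * f t))
    (hCK : ∀ f ∈ modelSpace θ, Cm f ∈ modelSpace θ) :
    ∀ f : modelSpace θ,
      ((ContinuousLinearMap.adjoint A f : L2T)) =
        Cm ((A ⟨Cm (f : L2T), hCK (f : L2T) f.2⟩ : L2T)) := by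
  classical
  have hmul : ∀ u : L2T, MemLp (fun t => φ t * u t) 2 μT := by
    intro u
    refine MemLp.of_le_mul (c := M) (Lp.memLp u) (hφm.mul (Lp.aestronglyMeasurable u)) ?_
    filter_upwards [hφb] with t ht
    rw [norm_mul]
    exact mul_le_mul_of_nonneg_right ht (norm_nonneg _)
  have hsym : ∀ a b : L2T, (inner ℂ (Cm a) b : ℂ) = inner ℂ (Cm b) a := by
    intro a b
    rw [MeasureTheory.L2.inner_def, MeasureTheory.L2.inner_def]
    refine integral_congr_ae ?_
    filter_upwards [hC a, hC b] with t h1 h2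
    simp only [h1, h2, RCLike.inner_apply, map_mul, starRingEnd_apply, star_star]
    ring
  intro f
  set Cf : modelSpace θ := ⟨Cm (f : L2T), hCK (f : L2T) f.2⟩ with hCfdef
  have hmem : Cm ((A Cf : L2T)) ∈ modelSpace θ := hCK _ (A Cf).2
  have key : ContinuousLinearMap.adjoint A f = (⟨Cm ((A Cf : L2T)), hmem⟩ : modelSpace θ) := by
    apply ext_inner_right ℂ
    intro g
    rw [ContinuousLinearMap.adjoint_inner_left]
    set g₂ : L2T := MemLp.toLp _ (hmul (g : L2T)) with hg₂def
    have hg₂ : ⇑g₂ =ᵐ[μT] fun t => φ t * (g : L2T) t := MemLp.coeFn_toLp _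
    set g₁ : L2T := MemLp.toLp _ (hmul (Cm (f : L2T))) with hg₁def
    have hg₁ : ⇑g₁ =ᵐ[μT] fun t => φ t * Cm (f : L2T) t := MemLp.coeFn_toLp _
    have hAg : A g = Pmod θ g₂ := hA g g₂ hg₂
    have hACf : A Cf = Pmod θ g₁ := hA Cf g₁ hg₁
    have hCg : Cm (g : L2T) ∈ modelSpace θ := hCK _ g.2
    have step1 : (inner ℂ f (A g) : ℂ) = inner ℂ (f : L2T) g₂ := by
      rw [hAg]
      unfold Pmod
      exact Submodule.inner_orthogonalProjectionOnto_eq_of_mem_left (K := modelSpace θ) f g₂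
    have step2 : (inner ℂ (⟨Cm ((A Cf : L2T)), hmem⟩ : modelSpace θ) g : ℂ)
        = inner ℂ (Cm (g : L2T)) g₁ := by
      rw [Submodule.coe_inner]
      rw [hsym, hACf]
      have h2 : (inner ℂ (⟨Cm (g : L2T), hCg⟩ : modelSpace θ) (Pmod θ g₁) : ℂ)
          = inner ℂ (Cm (g : L2T)) g₁ := by
        unfold Pmod
        exact Submodule.inner_orthogonalProjectionOnto_eq_of_mem_left (K := modelSpace θ) (⟨Cm (g : L2T), hCg⟩ : modelSpace θ) g₁
      rw [← h2, Submodule.coe_inner]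
    have step3 : (inner ℂ (Cm (g : L2T)) g₁ : ℂ) = inner ℂ (f : L2T) g₂ := by
      rw [MeasureTheory.L2.inner_def, MeasureTheory.L2.inner_def]
      refine integral_congr_ae ?_
      filter_upwards [hC (g : L2T), hC (f : L2T), hg₁, hg₂, hθ.unimod] with t h1 h2 h3 h4 h5
      have hθ1 : θ t * (starRingEnd ℂ) (θ t) = 1 := by
        rw [Complex.mul_conj']
        rw [show ‖θ t‖ = 1 from h5]
        norm_num
      have hz : fourier 1 t * (starRingEnd ℂ) (fourier 1 t) = 1 := by
        rw [← fourier_neg, ← fourier_add]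
        norm_num
      simp only [h1, h2, h3, h4, RCLike.inner_apply, map_mul, starRingEnd_apply, star_star]
      simp only [← starRingEnd_apply]
      linear_combination ((g : L2T) t * φ t * (starRingEnd ℂ) ((f : L2T) t)
          * (θ t * (starRingEnd ℂ) (θ t))) * hz
        + ((g : L2T) t * φ t * (starRingEnd ℂ) ((f : L2T) t)) * hθ1
    rw [step1, step2, step3]
  rw [key]
end
end
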